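/- Define the debiased estimator b̂_{-G} = β̂_{-G} + (1/n) M X_{-G}^T (I − P_G)(Y − X_{-G}β̂_{-G}) and b̂_G = (X_G^T X_G)^{-1} X_G^T (Y − X_{-G} b̂_{-G}). Then with Y = X_G β_G⁰ + X_{-G}β_{-G}⁰ + ε, the exact identity holds: b̂_G = β_G⁰ + (X_G^T X_G)^{-1} X_G^T ε − (1/n) Θ M X_{-G}^T (I − P_G) ε − R(β̂_{-G} − β_{-G}⁰), where Θ = (X_G^T X_G)^{-1} X_G^T X_{-G} and R = Θ − (1/n) Θ M X_{-G}^T (I − P_G) X_{-G}. -/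

import Mathlib

/-!
Write `A = (X_Gᵀ X_G)⁻¹ X_Gᵀ`, a left inverse of `X_G`, and `Q = I - P_G`, which annihilates
`X_G`. Plugging the model into `b̂_G` gives `b̂_G - β_G⁰ = Aε - Θ (b̂_{-G} - β_{-G}⁰)`, and since
`Q` kills the `X_G β_G⁰` part of `Y`, the debiasing step gives
`b̂_{-G} - β_{-G}⁰ = (I - n⁻¹ M X_{-G}ᵀ Q X_{-G}) (β̂_{-G} - β_{-G}⁰) + n⁻¹ M X_{-G}ᵀ Q ε`.
Multiplying the latter by `Θ` produces `R` and the claimed identity.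
-/

namespace Matrix

variable {ι κ ν : Type*} [Fintype ι] [Fintype κ] [Fintype ν] {R : Type*} [CommRing R]

theorem gram_inv_mul_transpose_mul_self [DecidableEq κ] (X : Matrix ι κ R)
    (h : IsUnit (Xᵀ * X).det) : (Xᵀ * X)⁻¹ * Xᵀ * X = 1 := by
  rw [Matrix.mul_assoc, nonsing_inv_mul _ h]

theorem one_sub_hatMatrix_mul_self [DecidableEq ι] [DecidableEq κ] (X : Matrix ι κ R)
    (h : IsUnit (Xᵀ * X).det) : (1 - X * (Xᵀ * X)⁻¹ * Xᵀ) * X = 0 := by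
  rw [Matrix.sub_mul, Matrix.one_mul, Matrix.mul_assoc, Matrix.mul_assoc, nonsing_inv_mul _ h,
    Matrix.mul_one, sub_self]

theorem leftInverse_mulVec_partialResidual [DecidableEq κ] {A : Matrix κ ι R} {XG : Matrix ι κ R}
    (hA : A * XG = 1) (Xm : Matrix ι ν R) (βG : κ → R) (βm b : ν → R) (ε : ι → R) :
    A *ᵥ (XG *ᵥ βG + Xm *ᵥ βm + ε - Xm *ᵥ b) = βG + A *ᵥ ε - (A * Xm) *ᵥ (b - βm) := by
  simp only [mulVec_add, mulVec_sub, mulVec_mulVec, hA, one_mulVec]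
  abel

theorem debiasingStep_sub [DecidableEq ν] {Q : Matrix ι ι R} {XG : Matrix ι κ R}
    (hQ : Q * XG = 0) (Xm : Matrix ι ν R) (M : Matrix ν ν R) (c : R) (βG : κ → R)
    (βm βhat : ν → R) (ε : ι → R) :
    βhat + c • (M * Xmᵀ * Q) *ᵥ (XG *ᵥ βG + Xm *ᵥ βm + ε - Xm *ᵥ βhat) - βm =
      (1 - c • (M * Xmᵀ * Q * Xm)) *ᵥ (βhat - βm) + c • (M * Xmᵀ * Q) *ᵥ ε := by
  have hQXG : (M * Xmᵀ * Q) *ᵥ (XG *ᵥ βG) = 0 := by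
    rw [mulVec_mulVec, Matrix.mul_assoc, hQ, Matrix.mul_zero, zero_mulVec]
  simp only [mulVec_add, mulVec_sub, hQXG, sub_mulVec, one_mulVec, smul_mulVec,
    ← mulVec_mulVec, smul_add, smul_sub]
  module

end Matrix

open Matrix

theorem stmt11_general {n k m : ℕ}
    (XG : Matrix (Fin n) (Fin k) ℝ) (Xm : Matrix (Fin n) (Fin m) ℝ)
    (hpd : (XGᵀ * XG).PosDef)
    (P : Matrix (Fin n) (Fin n) ℝ) (hP : P = XG * (XGᵀ * XG)⁻¹ * XGᵀ)
    (M : Matrix (Fin m) (Fin m) ℝ)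
    (βG0 : Fin k → ℝ) (βm0 : Fin m → ℝ) (ε : Fin n → ℝ)
    (Y : Fin n → ℝ) (hY : Y = XG.mulVec βG0 + Xm.mulVec βm0 + ε)
    (βhatm : Fin m → ℝ)
    (bhatm : Fin m → ℝ)
    (hbm : bhatm = βhatm + (1 / (n : ℝ)) •
      (M * Xmᵀ * (1 - P)).mulVec (Y - Xm.mulVec βhatm))
    (bhatG : Fin k → ℝ)
    (hbG : bhatG = ((XGᵀ * XG)⁻¹ * XGᵀ).mulVec (Y - Xm.mulVec bhatm))
    (Θ : Matrix (Fin k) (Fin m) ℝ) (hΘ : Θ = (XGᵀ * XG)⁻¹ * XGᵀ * Xm)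
    (R : Matrix (Fin k) (Fin m) ℝ)
    (hR : R = Θ - (1 / (n : ℝ)) • (Θ * M * Xmᵀ * (1 - P) * Xm)) :
    bhatG = βG0 + ((XGᵀ * XG)⁻¹ * XGᵀ).mulVec ε
      - (1 / (n : ℝ)) • (Θ * M * Xmᵀ * (1 - P)).mulVec ε
      - R.mulVec (βhatm - βm0) := by
  have hdet : IsUnit (XGᵀ * XG).det := isUnit_iff_ne_zero.mpr hpd.det_pos.ne'
  have hQ : (1 - P) * XG = 0 := hP ▸ one_sub_hatMatrix_mul_self XG hdet
  have hbmErr : bhatm - βm0 = (1 - (1 / (n : ℝ)) • (M * Xmᵀ * (1 - P) * Xm)) *ᵥ (βhatm - βm0)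
      + (1 / (n : ℝ)) • (M * Xmᵀ * (1 - P)) *ᵥ ε := by
    rw [hbm, hY]
    exact debiasingStep_sub hQ Xm M _ βG0 βm0 βhatm ε
  have hbGErr : bhatG = βG0 + ((XGᵀ * XG)⁻¹ * XGᵀ) *ᵥ ε - Θ *ᵥ (bhatm - βm0) := by
    rw [hbG, hY, hΘ]
    exact leftInverse_mulVec_partialResidual (gram_inv_mul_transpose_mul_self XG hdet) Xm _ _ _ ε
  rw [hbGErr, hbmErr, hR]
  -- keeps `simp` from distributing the products over `1 - P`
  generalize 1 - P = Q
  simp only [mulVec_add, sub_mulVec, mulVec_sub, mulVec_smul, smul_mulVec, mulVec_mulVec,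
    Matrix.mul_one, Matrix.mul_assoc]
  abel

/-- exact identity for the debiased estimator `b̂_G`. -/
theorem stmt11 {n k m : ℕ} (hn : 0 < n)
    (XG : Matrix (Fin n) (Fin k) ℝ) (Xm : Matrix (Fin n) (Fin m) ℝ)
    (hpd : (XGᵀ * XG).PosDef)
    (P : Matrix (Fin n) (Fin n) ℝ) (hP : P = XG * (XGᵀ * XG)⁻¹ * XGᵀ)
    (M : Matrix (Fin m) (Fin m) ℝ)
    (βG0 : Fin k → ℝ) (βm0 : Fin m → ℝ) (ε : Fin n → ℝ)
    (Y : Fin n → ℝ) (hY : Y = XG.mulVec βG0 + Xm.mulVec βm0 + ε)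
    (βhatm : Fin m → ℝ)
    (bhatm : Fin m → ℝ)
    (hbm : bhatm = βhatm + (1 / (n : ℝ)) •
      (M * Xmᵀ * (1 - P)).mulVec (Y - Xm.mulVec βhatm))
    (bhatG : Fin k → ℝ)
    (hbG : bhatG = ((XGᵀ * XG)⁻¹ * XGᵀ).mulVec (Y - Xm.mulVec bhatm))
    (Θ : Matrix (Fin k) (Fin m) ℝ) (hΘ : Θ = (XGᵀ * XG)⁻¹ * XGᵀ * Xm)
    (R : Matrix (Fin k) (Fin m) ℝ)
    (hR : R = Θ - (1 / (n : ℝ)) • (Θ * M * Xmᵀ * (1 - P) * Xm)) :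
    bhatG = βG0 + ((XGᵀ * XG)⁻¹ * XGᵀ).mulVec ε
      - (1 / (n : ℝ)) • (Θ * M * Xmᵀ * (1 - P)).mulVec ε
      - R.mulVec (βhatm - βm0) :=
  stmt11_general XG Xm hpd P hP M βG0 βm0 ε Y hY βhatm bhatm hbm bhatG hbG Θ hΘ R hR
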